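/- For every κ ≥ 1 and E ≥ 0, one has g((κ − 1/2)E + κ − 1) − g(E/2) ≥ ln(2κ − 1). -/

import Mathlib

/-! With `c = 2κ - 1 ≥ 1` and `x = E/2`, the two arguments of `g` are `x` and
`c (x + 1/2) - 1/2 ≥ x`. So it suffices that `x ↦ g x - log (x + 1/2)` is monotone on `[0, ∞)`,
as the two `log (· + 1/2)` terms differ by exactly `log c`. Its derivative
`log (1 + 1/x) - 2 / (2x + 1)` is nonnegative by `log (1 + t) ≥ 2t / (t + 2)`. -/

noncomputable def g (x : ℝ) : ℝ := (x + 1) * Real.log (x + 1) - x * Real.log x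

open Real Set

theorem two_div_le_log_add_one_sub_log {x : ℝ} (hx : 0 < x) :
    2 / (2 * x + 1) ≤ log (x + 1) - log x := by
  have h := le_log_one_add_of_nonneg (inv_nonneg.mpr hx.le)
  rw [← log_div (by positivity) hx.ne', add_div, div_self hx.ne', add_comm, one_div]
  convert h using 1
  field_simp

theorem continuous_g : Continuous g :=
  (continuous_mul_log.comp (continuous_add_const 1)).sub continuous_mul_log

theorem hasDerivAt_g {x : ℝ} (hx : 0 < x) : HasDerivAt g (log (x + 1) - log x) x := by
  have hshift := (hasDerivAt_id' x).add_const (1 : ℝ)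
  have h : HasDerivAt g (1 * log (x + 1) + (x + 1) * (1 / (x + 1)) - (1 * log x + x * (1 / x))) x :=
    (hshift.mul (hshift.log (by positivity))).sub
      ((hasDerivAt_id' x).mul ((hasDerivAt_id' x).log hx.ne'))
  convert h using 1
  field_simp
  ring

theorem monotoneOn_g_sub_log_add_half :
    MonotoneOn (fun x => g x - log (x + 1 / 2)) (Ici 0) := by
  refine monotoneOn_of_hasDerivWithinAt_nonneg
    (f' := fun x => log (x + 1) - log x - 2 / (2 * x + 1)) (convex_Ici 0) ?_ ?_ ?_
  · exact continuous_g.continuousOn.sub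
      (ContinuousOn.log (by fun_prop) fun x hx => by rw [mem_Ici] at hx; positivity)
  · intro x hx
    rw [interior_Ici] at hx
    have hlog := ((hasDerivAt_id' x).add_const (1 / 2 : ℝ)).log (by rw [mem_Ioi] at hx; positivity)
    refine ((hasDerivAt_g hx).sub hlog).hasDerivWithinAt.congr_deriv ?_
    field_simp
  · intro x hx
    rw [interior_Ici] at hx
    exact sub_nonneg.mpr (two_div_le_log_add_one_sub_log hx)

theorem log_le_g_sub_g {c x : ℝ} (hc : 1 ≤ c) (hx : 0 ≤ x) :
    log c ≤ g (c * (x + 1 / 2) - 1 / 2) - g x := by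
  have hx' : x ≤ c * (x + 1 / 2) - 1 / 2 := by nlinarith
  have h := monotoneOn_g_sub_log_add_half hx (hx.trans hx') hx'
  simp only at h
  rw [sub_add_cancel, log_mul (by positivity) (by positivity)] at h
  linarith

/-- for `κ ≥ 1` and `E ≥ 0`,
`g((κ−1/2)E + κ−1) − g(E/2) ≥ ln(2κ−1)`. -/
theorem upper_ge_lower (κ E : ℝ) (hκ : 1 ≤ κ) (hE : 0 ≤ E) :
    Real.log (2 * κ - 1) ≤ g ((κ - 1 / 2) * E + κ - 1) - g (E / 2) := by
  have h := log_le_g_sub_g (c := 2 * κ - 1) (x := E / 2) (by linarith) (by positivity)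
  rwa [show (2 * κ - 1) * (E / 2 + 1 / 2) - 1 / 2 = (κ - 1 / 2) * E + κ - 1 by ring] at h
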